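/- If s̄ ∈ (a,b) satisfies the first-order condition ⟨S(s̄) − u_d, u^{(1)}(s̄)⟩ + φ'(s̄) = 0 together with the second-order condition ‖u^{(1)}(s̄)‖² + ⟨S(s̄) − u_d, u^{(2)}(s̄)⟩ + φ''(s̄) > 0, then s̄ is a strict local minimizer of F: there exists δ > 0 such that F(s̄) < F(s) for every s ∈ (a,b) with 0 < |s − s̄| < δ. -/

import Mathlib

open Real Filter
open scoped RealInnerProductSpace

/-!
For `l ≥ μ > 0` and `τ` in a compact subinterval of `(0, 1]`, the weights `|log l| ^ m * l ^ (-τ)`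
are bounded uniformly in `l`. Hence every coordinate of `S` and `u¹` obeys a second-order Taylor
bound with remainder `C (t - s)² |f_k|`, which sums in `ℓ²` and gives `S' = u¹` and `(u¹)' = u²`.
So `F' = ⟪S - u_d, u¹⟫ + φ'` vanishes at `s̄` and has positive derivative there: `F'` changes
sign from negative to positive at `s̄`, and `F` strictly decreases to the left of `s̄` and strictly
increases to its right.
-/

open Set Topology Asymptotics

theorem abs_sub_sub_mul_le_mul_sq {g g' g'' : ℝ → ℝ} {D : Set ℝ} {C s t : ℝ}
    (hD : Convex ℝ D) (hg : ∀ x ∈ D, HasDerivAt g (g' x) x)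
    (hg' : ∀ x ∈ D, HasDerivAt g' (g'' x) x) (hC : ∀ x ∈ D, |g'' x| ≤ C)
    (hs : s ∈ D) (ht : t ∈ D) :
    |g t - g s - (t - s) * g' s| ≤ C * (t - s) ^ 2 := by
  have hst : uIcc s t ⊆ D := hD.ordConnected.uIcc_subset hs ht
  have hg'_lip : ∀ x ∈ uIcc s t, ‖g' x - g' s‖ ≤ C * |t - s| := by
    intro x hx
    calc ‖g' x - g' s‖ ≤ C * ‖x - s‖ :=
          hD.norm_image_sub_le_of_norm_hasDerivWithin_le
            (fun y hy => (hg' y hy).hasDerivWithinAt) hC hs (hst hx)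
      _ ≤ C * |t - s| :=
          mul_le_mul_of_nonneg_left (abs_sub_left_of_mem_uIcc hx)
            ((abs_nonneg _).trans (hC s hs))
  have hderiv : ∀ x ∈ uIcc s t, HasDerivWithinAt (fun x => g x - (x - s) * g' s)
      (g' x - g' s) (uIcc s t) x := by
    intro x hx
    have : HasDerivAt (fun x => g x - (x - s) * g' s) (g' x - 1 * g' s) x :=
      (hg x (hst hx)).sub (((hasDerivAt_id' x).sub_const s).mul_const (g' s))
    simpa using this.hasDerivWithinAt
  have := (convex_uIcc s t).norm_image_sub_le_of_norm_hasDerivWithin_le hderiv hg'_lip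
    left_mem_uIcc right_mem_uIcc
  calc |g t - g s - (t - s) * g' s| = ‖(g t - (t - s) * g' s) - (g s - (s - s) * g' s)‖ := by
        rw [Real.norm_eq_abs]; ring_nf
    _ ≤ C * |t - s| * ‖t - s‖ := this
    _ = C * (t - s) ^ 2 := by rw [Real.norm_eq_abs, mul_assoc, ← abs_mul, ← sq, abs_sq]

theorem hasDerivAt_of_norm_sub_sub_smul_le {E : Type*} [NormedAddCommGroup E] [NormedSpace ℝ E]
    {V : ℝ → E} {W : E} {x₀ C : ℝ}
    (h : ∀ᶠ t in 𝓝 x₀, ‖V t - V x₀ - (t - x₀) • W‖ ≤ C * (t - x₀) ^ 2) :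
    HasDerivAt V W x₀ := by
  rw [hasDerivAt_iff_isLittleO]
  refine IsBigO.trans_isLittleO (g := fun t => ‖t - x₀‖ ^ 2) ?_
    (isLittleO_pow_sub_sub x₀ one_lt_two)
  refine IsBigO.of_bound C (h.mono fun t ht => ?_)
  simpa [sq_abs] using ht

theorem pow_mul_exp_neg_mul_le {x c : ℝ} (hx : 0 ≤ x) (hc : 0 < c) (m : ℕ) :
    x ^ m * exp (-(c * x)) ≤ m.factorial / c ^ m := by
  have := pow_div_factorial_le_exp _ (mul_nonneg hc.le hx) m
  rw [exp_neg, ← div_eq_mul_inv, div_le_div_iff₀ (by positivity) (by positivity)]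
  rw [div_le_iff₀ (by positivity)] at this
  calc x ^ m * c ^ m = (c * x) ^ m := by ring
    _ ≤ _ := this
    _ = _ := by ring

theorem exists_abs_log_pow_mul_rpow_neg_le {μ c : ℝ} (hμ : 0 < μ) (hc : 0 < c) (m : ℕ) :
    ∃ B, ∀ l, μ ≤ l → ∀ τ ∈ Icc c 1, |log l| ^ m * l ^ (-τ) ≤ B := by
  refine ⟨m.factorial / c ^ m + |log μ| ^ m * μ⁻¹, fun l hl τ hτ => ?_⟩
  have hl0 : 0 < l := hμ.trans_le hl
  have hsmall : 0 ≤ |log μ| ^ m * μ⁻¹ := by positivity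
  have hlarge : (0 : ℝ) ≤ m.factorial / c ^ m := by positivity
  -- for `l ≥ 1` the decay of `l ^ (-c)` absorbs the logarithm; for `l < 1` both factors are
  -- largest at `l = μ`
  rcases le_or_gt 1 l with h1 | h1
  · have hlog : 0 ≤ log l := log_nonneg h1
    calc |log l| ^ m * l ^ (-τ) ≤ log l ^ m * exp (-(c * log l)) := by
          rw [abs_of_nonneg hlog, rpow_def_of_pos hl0]
          gcongr
          nlinarith [hτ.1]
      _ ≤ _ := by linarith [pow_mul_exp_neg_mul_le hlog hc m]
  · have hlog : |log l| ≤ |log μ| := by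
      rw [abs_of_neg (log_neg hl0 h1), abs_of_neg (log_neg hμ (hl.trans_lt h1))]
      linarith [log_le_log hμ hl]
    calc |log l| ^ m * l ^ (-τ) ≤ |log μ| ^ m * μ⁻¹ := by
          gcongr
          calc l ^ (-τ) ≤ l ^ (-1 : ℝ) := rpow_le_rpow_of_exponent_ge hl0 h1.le (by linarith [hτ.2])
            _ = l⁻¹ := rpow_neg_one l
            _ ≤ μ⁻¹ := inv_anti₀ hμ hl
      _ ≤ _ := by linarith

theorem hasDerivAt_neg_log_pow_mul_rpow_neg {l : ℝ} (hl : 0 < l) (j : ℕ) (x τ : ℝ) :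
    HasDerivAt (fun τ => (-log l) ^ j * l ^ (-τ) * x) ((-log l) ^ (j + 1) * l ^ (-τ) * x) τ := by
  have := (((hasDerivAt_neg τ).const_rpow hl).const_mul ((-log l) ^ j)).mul_const x
  exact this.congr_deriv (by ring)

theorem hasDerivAt_of_apply_eq_neg_log_pow_mul_rpow {ι : Type*} {p : ENNReal} [Fact (1 ≤ p)]
    {μ : ℝ} (hμ : 0 < μ) {l : ι → ℝ} (hl : ∀ k, μ ≤ l k) (f : lp (fun _ : ι => ℝ) p) (m : ℕ)
    {V W : ℝ → lp (fun _ : ι => ℝ) p}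
    (hV : ∀ s ∈ Ioo (0 : ℝ) 1, ∀ k, V s k = (-log (l k)) ^ m * l k ^ (-s) * f k)
    (hW : ∀ s ∈ Ioo (0 : ℝ) 1, ∀ k, W s k = (-log (l k)) ^ (m + 1) * l k ^ (-s) * f k)
    {s : ℝ} (hs : s ∈ Ioo (0 : ℝ) 1) : HasDerivAt V (W s) s := by
  obtain ⟨B, hB⟩ := exists_abs_log_pow_mul_rpow_neg_le hμ (half_pos hs.1) (m + 2)
  have hsc : s ∈ Ioo (s / 2) 1 := ⟨half_lt_self hs.1, hs.2⟩
  have hc01 : Ioo (s / 2) 1 ⊆ Ioo 0 1 := Ioo_subset_Ioo_left (half_pos hs.1).le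
  refine hasDerivAt_of_norm_sub_sub_smul_le (C := |B| * ‖f‖) ?_
  filter_upwards [Ioo_mem_nhds hsc.1 hsc.2] with t ht
  have hcoord : ∀ k, ‖(V t - V s - (t - s) • W s) k‖ ≤ ‖((|B| * (t - s) ^ 2) • f) k‖ := by
    intro k
    have hlk : 0 < l k := hμ.trans_le (hl k)
    have hbound : ∀ τ ∈ Ioo (s / 2) 1,
        |(-log (l k)) ^ (m + 2) * l k ^ (-τ) * f k| ≤ |B| * |f k| := by
      intro τ hτ
      rw [abs_mul, abs_mul, abs_pow, abs_neg, abs_of_pos (rpow_pos_of_pos hlk _)]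
      gcongr
      exact (hB (l k) (hl k) τ (Ioo_subset_Icc_self hτ)).trans (le_abs_self B)
    have := abs_sub_sub_mul_le_mul_sq (convex_Ioo (s / 2) 1)
      (fun τ _ => hasDerivAt_neg_log_pow_mul_rpow_neg hlk m (f k) τ)
      (fun τ _ => hasDerivAt_neg_log_pow_mul_rpow_neg hlk (m + 1) (f k) τ) hbound hsc ht
    simp only [lp.coeFn_sub, lp.coeFn_smul, Pi.sub_apply, Pi.smul_apply, smul_eq_mul,
      Real.norm_eq_abs, hV t (hc01 ht), hV s hs, hW s hs]
    rw [abs_mul, abs_mul, abs_abs, abs_sq]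
    linarith
  calc ‖V t - V s - (t - s) • W s‖ ≤ ‖(|B| * (t - s) ^ 2) • f‖ :=
        lp.norm_mono (zero_lt_one.trans_le Fact.out).ne' hcoord
    _ = |B| * ‖f‖ * (t - s) ^ 2 := by
        rw [norm_smul, Real.norm_eq_abs, abs_mul, abs_abs, abs_sq]; ring

theorem eventually_lt_of_hasDerivAt_of_sign_eq {F G : ℝ → ℝ} {x₀ : ℝ}
    (hF : ∀ᶠ x in 𝓝 x₀, HasDerivAt F (G x) x)
    (hG : ∀ᶠ x in 𝓝 x₀, SignType.sign (G x) = SignType.sign (x - x₀)) :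
    ∀ᶠ x in 𝓝[≠] x₀, F x₀ < F x := by
  obtain ⟨ε, hε, hball⟩ := Metric.eventually_nhds_iff_ball.mp (hF.and hG)
  rw [Real.ball_eq_Ioo] at hball
  have hcont : ContinuousOn F (Ioo (x₀ - ε) (x₀ + ε)) := fun y hy =>
    (hball y hy).1.continuousAt.continuousWithinAt
  have hmono : StrictMonoOn F (Ico x₀ (x₀ + ε)) := by
    refine strictMonoOn_of_deriv_pos (convex_Ico _ _)
      (hcont.mono (Ico_subset_Ioo_left (by linarith))) fun y hy => ?_
    rw [interior_Ico] at hy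
    have hy' : y ∈ Ioo (x₀ - ε) (x₀ + ε) := ⟨by linarith [hy.1], hy.2⟩
    rw [(hball y hy').1.deriv, ← sign_eq_one_iff, (hball y hy').2, sign_eq_one_iff]
    linarith [hy.1]
  have hanti : StrictAntiOn F (Ioc (x₀ - ε) x₀) := by
    refine strictAntiOn_of_deriv_neg (convex_Ioc _ _)
      (hcont.mono (Ioc_subset_Ioo_right (by linarith))) fun y hy => ?_
    rw [interior_Ioc] at hy
    have hy' : y ∈ Ioo (x₀ - ε) (x₀ + ε) := ⟨hy.1, by linarith [hy.2]⟩
    rw [(hball y hy').1.deriv, ← sign_eq_neg_one_iff, (hball y hy').2, sign_eq_neg_one_iff]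
    linarith [hy.2]
  filter_upwards [nhdsWithin_le_nhds (Ioo_mem_nhds (by linarith : x₀ - ε < x₀)
    (by linarith : x₀ < x₀ + ε)), self_mem_nhdsWithin] with x hx hne
  rcases lt_or_gt_of_ne hne with hlt | hgt
  · exact hanti ⟨hx.1, hlt.le⟩ ⟨by linarith, le_rfl⟩ hlt
  · exact hmono ⟨le_rfl, by linarith⟩ ⟨hgt.le, hx.2⟩ hgt

theorem eventually_lt_of_deriv_deriv_pos {F G : ℝ → ℝ} {x₀ g : ℝ}
    (hF : ∀ᶠ x in 𝓝 x₀, HasDerivAt F (G x) x) (hG₀ : G x₀ = 0) (hG : HasDerivAt G g x₀)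
    (hg : 0 < g) : ∀ᶠ x in 𝓝[≠] x₀, F x₀ < F x :=
  eventually_lt_of_hasDerivAt_of_sign_eq hF
    (eventually_nhdsWithin_sign_eq_of_deriv_pos (hG.deriv ▸ hg) hG₀)

theorem second_order_sufficient_general (lam1 : ℝ) (hlam1 : 0 < lam1) (lam : ℕ → ℝ)
    (hlam : ∀ k, lam1 ≤ lam k) (f : lp (fun _ : ℕ => ℝ) 2)
    (S : ℝ → lp (fun _ : ℕ => ℝ) 2)
    (hS : ∀ s ∈ Set.Ioo (0 : ℝ) 1, ∀ k, S s k = lam k ^ (-s) * f k)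
    (u1 u2 : ℝ → lp (fun _ : ℕ => ℝ) 2)
    (hu1 : ∀ s ∈ Set.Ioo (0 : ℝ) 1, ∀ k,
      u1 s k = -(Real.log (lam k)) * lam k ^ (-s) * f k)
    (hu2 : ∀ s ∈ Set.Ioo (0 : ℝ) 1, ∀ k,
      u2 s k = (Real.log (lam k)) ^ 2 * lam k ^ (-s) * f k)
    (ud : lp (fun _ : ℕ => ℝ) 2) (a b : ℝ) (ha : 0 ≤ a) (hb : b ≤ 1)
    (φ φ' φ'' : ℝ → ℝ)
    (hφd : ∀ s ∈ Set.Ioo a b, HasDerivAt φ (φ' s) s)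
    (hφdd : ∀ s ∈ Set.Ioo a b, HasDerivAt φ' (φ'' s) s)
    (F : ℝ → ℝ) (hF : ∀ s ∈ Set.Ioo a b, F s = 1 / 2 * ‖S s - ud‖ ^ 2 + φ s)
    (sbar : ℝ) (hsbar : sbar ∈ Set.Ioo a b)
    (hfirst : ⟪S sbar - ud, u1 sbar⟫ + φ' sbar = 0)
    (hsecond : 0 < ‖u1 sbar‖ ^ 2 + ⟪S sbar - ud, u2 sbar⟫ + φ'' sbar) :
    ∃ δ > 0, ∀ s ∈ Set.Ioo a b, s ≠ sbar → |s - sbar| < δ → F sbar < F s := by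
  have hab01 : Ioo a b ⊆ Ioo 0 1 := Ioo_subset_Ioo ha hb
  have hSu1 : ∀ s ∈ Ioo (0 : ℝ) 1, HasDerivAt S (u1 s) s :=
    fun s hs => hasDerivAt_of_apply_eq_neg_log_pow_mul_rpow hlam1 hlam f 0
      (fun s hs k => by simp [hS s hs k]) (fun s hs k => by simp [hu1 s hs k]) hs
  have hu1u2 : HasDerivAt u1 (u2 sbar) sbar :=
    hasDerivAt_of_apply_eq_neg_log_pow_mul_rpow hlam1 hlam f 1
      (fun s hs k => by simp [hu1 s hs k]) (fun s hs k => by simp [hu2 s hs k]) (hab01 hsbar)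
  set G : ℝ → ℝ := fun s => ⟪S s - ud, u1 s⟫ + φ' s
  have hFG : ∀ᶠ s in 𝓝 sbar, HasDerivAt F (G s) s := by
    filter_upwards [Ioo_mem_nhds hsbar.1 hsbar.2] with s hs
    have hF' : F =ᶠ[𝓝 s] fun t => 1 / 2 * ‖S t - ud‖ ^ 2 + φ t :=
      eventually_of_mem (Ioo_mem_nhds hs.1 hs.2) hF
    refine ((((hSu1 s (hab01 hs)).sub_const ud).norm_sq.const_mul (1 / 2)).add (hφd s hs)
      |>.congr_deriv ?_).congr_of_eventuallyEq hF'
    ring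
  have hG : HasDerivAt G (‖u1 sbar‖ ^ 2 + ⟪S sbar - ud, u2 sbar⟫ + φ'' sbar) sbar := by
    refine ((((hSu1 sbar (hab01 hsbar)).sub_const ud).inner ℝ hu1u2).add (hφdd sbar hsbar)
      |>.congr_deriv ?_)
    rw [← real_inner_self_eq_norm_sq]
    ring
  obtain ⟨δ, hδ, hball⟩ := Metric.eventually_nhds_iff.mp <| eventually_nhdsWithin_iff.mp <|
    eventually_lt_of_deriv_deriv_pos hFG hfirst hG hsecond
  exact ⟨δ, hδ, fun s _ hne hs => hball (by rwa [Real.dist_eq]) hne⟩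

/-- Second-order sufficient optimality condition: if `s̄ ∈ (a,b)` satisfies the first-order
condition `⟨S(s̄) − u_d, u¹(s̄)⟩ + φ'(s̄) = 0` and the second-order condition
`‖u¹(s̄)‖² + ⟨S(s̄) − u_d, u²(s̄)⟩ + φ''(s̄) > 0`, then `s̄` is a strict local minimizer of the
reduced cost functional `F`. -/
theorem second_order_sufficient (lam1 : ℝ) (hlam1 : 0 < lam1) (lam : ℕ → ℝ)
    (hlam : ∀ k, lam1 ≤ lam k) (f : lp (fun _ : ℕ => ℝ) 2)
    (S : ℝ → lp (fun _ : ℕ => ℝ) 2)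
    (hS : ∀ s ∈ Set.Ioo (0 : ℝ) 1, ∀ k, S s k = lam k ^ (-s) * f k)
    (u1 u2 : ℝ → lp (fun _ : ℕ => ℝ) 2)
    (hu1 : ∀ s ∈ Set.Ioo (0 : ℝ) 1, ∀ k,
      u1 s k = -(Real.log (lam k)) * lam k ^ (-s) * f k)
    (hu2 : ∀ s ∈ Set.Ioo (0 : ℝ) 1, ∀ k,
      u2 s k = (Real.log (lam k)) ^ 2 * lam k ^ (-s) * f k)
    (ud : lp (fun _ : ℕ => ℝ) 2) (a b : ℝ) (ha : 0 ≤ a) (hab : a < b) (hb : b ≤ 1)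
    (φ φ' φ'' : ℝ → ℝ) (hφ0 : ∀ s ∈ Set.Ioo a b, 0 ≤ φ s)
    (hφconv : ConvexOn ℝ (Set.Ioo a b) φ)
    (hφd : ∀ s ∈ Set.Ioo a b, HasDerivAt φ (φ' s) s)
    (hφdd : ∀ s ∈ Set.Ioo a b, HasDerivAt φ' (φ'' s) s)
    (hφddc : ContinuousOn φ'' (Set.Ioo a b))
    (hφa : Tendsto φ (nhdsWithin a (Set.Ioi a)) atTop)
    (hφb : Tendsto φ (nhdsWithin b (Set.Iio b)) atTop)
    (F : ℝ → ℝ) (hF : ∀ s ∈ Set.Ioo a b, F s = 1 / 2 * ‖S s - ud‖ ^ 2 + φ s)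
    (sbar : ℝ) (hsbar : sbar ∈ Set.Ioo a b)
    (hfirst : ⟪S sbar - ud, u1 sbar⟫ + φ' sbar = 0)
    (hsecond : 0 < ‖u1 sbar‖ ^ 2 + ⟪S sbar - ud, u2 sbar⟫ + φ'' sbar) :
    ∃ δ > 0, ∀ s ∈ Set.Ioo a b, s ≠ sbar → |s - sbar| < δ → F sbar < F s :=
  second_order_sufficient_general lam1 hlam1 lam hlam f S hS u1 u2 hu1 hu2 ud a b ha hb φ φ' φ'' hφd
    hφdd F hF sbar hsbar hfirst hsecond
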